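/- arXiv:1505.04546 — 4 statements merged into one kernel-verified Lean document; each statement's English description precedes it below -/
import Mathlib

section
/- (Euler's rotation theorem) Every rotation of ℝ³ has an axis: for every 3×3 real matrix A with Aᵀ * A = 1 and det A = 1, there exists a nonzero vector v ∈ ℝ³ with A·v = v. -/
open Matrix

/-- The action of a 3×3 matrix on ℝ³ by matrix–vector multiplication. -/
noncomputable def act (A : Matrix (Fin 3) (Fin 3) ℝ) (v : EuclideanSpace ℝ (Fin 3)) :
    EuclideanSpace ℝ (Fin 3) := WithLp.toLp 2 (A.mulVec v)

namespace Matrix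

variable {n R : Type*} [Fintype n] [DecidableEq n] [CommRing R]

theorem det_sub_one_eq_zero_of_transpose_mul_self_eq_one [NoZeroDivisors R] [CharZero R]
    (hodd : Odd (Fintype.card n)) {A : Matrix n n R} (horth : Aᵀ * A = 1) (hdet : A.det = 1) :
    (A - 1).det = 0 := by
  have hneg : (A - 1).det = -(A - 1).det :=
    calc (A - 1).det = Aᵀ.det * (A - 1).det := by rw [det_transpose, hdet, one_mul]
      _ = (1 - A)ᵀ.det := by rw [← det_mul, mul_sub, horth, mul_one, transpose_sub, transpose_one]
      _ = -(A - 1).det := by rw [det_transpose, ← neg_sub, det_neg, hodd.neg_one_pow, neg_one_mul]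
  exact CharZero.eq_neg_self_iff.mp hneg

theorem exists_mulVec_eq_self_iff_det_sub_one_eq_zero [IsDomain R] {A : Matrix n n R} :
    (∃ v ≠ 0, A *ᵥ v = v) ↔ (A - 1).det = 0 := by
  simp only [← exists_mulVec_eq_zero_iff, sub_mulVec, one_mulVec, sub_eq_zero]

end Matrix

/-- Euler's rotation theorem: every rotation of ℝ³ (orthogonal matrix with
determinant 1) fixes some nonzero vector, its axis. -/
theorem euler_rotation_theorem (A : Matrix (Fin 3) (Fin 3) ℝ)
    (horth : Aᵀ * A = 1) (hdet : A.det = 1) :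
    ∃ v : EuclideanSpace ℝ (Fin 3), v ≠ 0 ∧ act A v = v := by
  have hodd : Odd (Fintype.card (Fin 3)) := by decide
  obtain ⟨v, hv, hAv⟩ := exists_mulVec_eq_self_iff_det_sub_one_eq_zero.mpr
    (det_sub_one_eq_zero_of_transpose_mul_self_eq_one hodd horth hdet)
  exact ⟨WithLp.toLp 2 v, by simpa using hv, congrArg (WithLp.toLp 2) hAv⟩
end

section
/- Let G be a finite subgroup of SO(3) and let v ∈ ℝ³ be nonzero. Then the stabilizer of v in G, i.e., the subgroup {A ∈ G : A·v = v}, is a cyclic group (it consists of the rotations of G about the axis through v). -/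
open Matrix

/-- A 3×3 real matrix is a rotation if it is orthogonal with determinant 1. -/
def IsRotation (A : Matrix (Fin 3) (Fin 3) ℝ) : Prop := Aᵀ * A = 1 ∧ A.det = 1

/-!
Conjugating by a rotation that maps the first coordinate axis onto the line through `v` turns the
stabilizer of `v` into a group of rotations fixing that axis; orthogonality and `det = 1` force
these to be the matrices `!![1, 0, 0; 0, c, -s; 0, s, c]`. Sending such a matrix to `c + s i` is
an injective homomorphism into `ℂ`, and a finite group embedding in the multiplicative monoid of
a domain is cyclic.
-/

open MulAction

namespace Matrix

variable {n : Type*} [Fintype n] [DecidableEq n]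

instance (S : Submonoid (Matrix n n ℝ)) : SMul S (EuclideanSpace ℝ n) :=
  ⟨fun A x => WithLp.toLp 2 (A.1 *ᵥ x.ofLp)⟩

lemma submonoid_smul_def {S : Submonoid (Matrix n n ℝ)} (A : S) (x : EuclideanSpace ℝ n) :
    A • x = WithLp.toLp 2 (A.1 *ᵥ x.ofLp) := rfl

instance (S : Submonoid (Matrix n n ℝ)) : MulAction S (EuclideanSpace ℝ n) where
  one_smul x := by simp [submonoid_smul_def]
  mul_smul A B x := by simp [submonoid_smul_def, mulVec_mulVec]

lemma submonoid_smul_real_smul {S : Submonoid (Matrix n n ℝ)} (A : S) (c : ℝ)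
    (x : EuclideanSpace ℝ n) : A • c • x = c • A • x := by
  simp [submonoid_smul_def, mulVec_smul]

lemma stabilizer_specialOrthogonalGroup_le_smul (c : ℝ) (x : EuclideanSpace ℝ n) :
    stabilizer (specialOrthogonalGroup n ℝ) x ≤
      stabilizer (specialOrthogonalGroup n ℝ) (c • x) :=
  fun A hA => by
    rw [mem_stabilizer_iff] at hA ⊢
    rw [submonoid_smul_real_smul, hA]

lemma stabilizer_specialOrthogonalGroup_smul {c : ℝ} (hc : c ≠ 0) (x : EuclideanSpace ℝ n) :
    stabilizer (specialOrthogonalGroup n ℝ) (c • x) =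
      stabilizer (specialOrthogonalGroup n ℝ) x :=
  le_antisymm
    (by simpa [smul_smul, hc] using stabilizer_specialOrthogonalGroup_le_smul c⁻¹ (c • x))
    (stabilizer_specialOrthogonalGroup_le_smul c x)

lemma exists_mem_orthogonalGroup_mulVec_single (i : n) {u : EuclideanSpace ℝ n}
    (hu : ‖u‖ = 1) : ∃ Q ∈ orthogonalGroup n ℝ, Q *ᵥ Pi.single i 1 = u.ofLp := by
  have hu' : Orthonormal ℝ (({i} : Set n).domRestrict fun _ => u) :=
    orthonormal_subsingleton_iff.2 fun _ => hu
  obtain ⟨b, hb⟩ := hu'.exists_orthonormalBasis_extension_of_card_eq (by simp)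
  refine ⟨(EuclideanSpace.basisFun n ℝ).toBasis.toMatrix b,
    (EuclideanSpace.basisFun n ℝ).toMatrix_orthonormalBasis_mem_orthogonal b, ?_⟩
  ext j
  simp [Module.Basis.toMatrix_apply, hb i rfl]

def specialOrthogonalSubgroupOf (G : Set (Matrix n n ℝ)) (hGone : 1 ∈ G)
    (hGmul : ∀ A ∈ G, ∀ B ∈ G, A * B ∈ G) (hGinv : ∀ A ∈ G, A⁻¹ ∈ G) :
    Subgroup (specialOrthogonalGroup n ℝ) where
  carrier := {A | A.1 ∈ G}
  mul_mem' {A B} hA hB := hGmul A.1 hA B.1 hB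
  one_mem' := hGone
  inv_mem' {A} hA := by
    have hinv : (A⁻¹ : specialOrthogonalGroup n ℝ).1 = A.1⁻¹ :=
      (inv_eq_left_inv ((mem_orthogonalGroup_iff' _ _).1 A.2.1)).symm
    change (A⁻¹ : specialOrthogonalGroup n ℝ).1 ∈ G
    rw [hinv]
    exact hGinv A.1 hA

end Matrix

local notation "SO3" => specialOrthogonalGroup (Fin 3) ℝ
local notation "e₀" => EuclideanSpace.single (0 : Fin 3) (1 : ℝ)

def axisRotation (c s : ℝ) : Matrix (Fin 3) (Fin 3) ℝ := !![1, 0, 0; 0, c, -s; 0, s, c]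

lemma axisRotation_mul (c s c' s' : ℝ) :
    axisRotation c s * axisRotation c' s' = axisRotation (c * c' - s * s') (s * c' + c * s') := by
  ext i j
  fin_cases i <;> fin_cases j <;> simp [axisRotation, mul_apply, Fin.sum_univ_three] <;> ring

lemma eq_axisRotation_of_mem_stabilizer {A : SO3} (hA : A ∈ stabilizer SO3 e₀) :
    A.1 = axisRotation (A.1 1 1) (A.1 2 1) := by
  obtain ⟨hO, hdet⟩ := mem_specialOrthogonalGroup_iff.1 A.2
  have hcol : ∀ i, A.1 i 0 = if i = 0 then 1 else 0 := fun i => by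
    simpa [submonoid_smul_def, Pi.single_apply] using
      congrArg (fun x : EuclideanSpace ℝ (Fin 3) => x i) (mem_stabilizer_iff.1 hA)
  have h00 := congrFun (congrFun ((mem_orthogonalGroup_iff _ _).1 hO) 0) 0
  have h11 := congrFun (congrFun ((mem_orthogonalGroup_iff' _ _).1 hO) 1) 1
  have h12 := congrFun (congrFun ((mem_orthogonalGroup_iff' _ _).1 hO) 1) 2
  simp [mul_apply, Fin.sum_univ_three, hcol] at h00 h11 h12
  simp [det_fin_three, hcol] at hdet
  have h01 : A.1 0 1 = 0 := by nlinarith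
  have h02 : A.1 0 2 = 0 := by nlinarith
  rw [h01, zero_mul, zero_add] at h11 h12
  have h22 : A.1 2 2 = A.1 1 1 := by
    linear_combination A.1 1 1 * hdet + A.1 2 1 * h12 - A.1 2 2 * h11
  have h12' : A.1 1 2 = -A.1 2 1 := by
    linear_combination -A.1 2 1 * hdet + A.1 1 1 * h12 - A.1 1 2 * h11
  ext i j
  fin_cases i <;> fin_cases j <;> simp [axisRotation, hcol, h01, h02, h22, h12']

noncomputable def axisRotationHom : stabilizer SO3 e₀ →* ℂ where
  toFun A := ⟨A.1.1 1 1, A.1.1 2 1⟩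
  map_one' := by apply Complex.ext <;> simp
  map_mul' A B := by
    change (⟨(A.1.1 * B.1.1) 1 1, (A.1.1 * B.1.1) 2 1⟩ : ℂ) =
      ⟨A.1.1 1 1, A.1.1 2 1⟩ * ⟨B.1.1 1 1, B.1.1 2 1⟩
    rw [eq_axisRotation_of_mem_stabilizer A.2, eq_axisRotation_of_mem_stabilizer B.2,
      axisRotation_mul]
    apply Complex.ext <;> simp [axisRotation]
    ring

lemma axisRotationHom_injective : Function.Injective axisRotationHom := by
  intro A B hAB
  obtain ⟨h11, h21⟩ := Complex.ext_iff.1 hAB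
  apply Subtype.ext
  apply Subtype.ext
  rw [eq_axisRotation_of_mem_stabilizer A.2, eq_axisRotation_of_mem_stabilizer B.2]
  exact congrArg₂ axisRotation h11 h21

lemma exists_specialOrthogonalGroup_smul_single_eq_smul {w : EuclideanSpace ℝ (Fin 3)}
    (hw : w ≠ 0) : ∃ P : SO3, ∃ c : ℝ, c ≠ 0 ∧ P • e₀ = c • w := by
  have hu : ‖‖w‖⁻¹ • w‖ = 1 := norm_smul_inv_norm hw
  obtain ⟨Q, hQ, hQw⟩ := exists_mem_orthogonalGroup_mulVec_single 0 hu
  have hdet : Q.det * Q.det = 1 := by simpa using (det_of_mem_unitary hQ).2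
  have hnorm : ‖w‖⁻¹ ≠ 0 := inv_ne_zero (norm_ne_zero_iff.2 hw)
  rcases mul_self_eq_one_iff.1 hdet with hdet | hdet
  · refine ⟨⟨Q, mem_specialOrthogonalGroup_iff.2 ⟨hQ, hdet⟩⟩, ‖w‖⁻¹, hnorm, ?_⟩
    rw [submonoid_smul_def, PiLp.ofLp_single, hQw, WithLp.toLp_ofLp]
  · have hnegQ : -Q ∈ orthogonalGroup (Fin 3) ℝ := by
      rw [mem_orthogonalGroup_iff'] at hQ ⊢
      simpa using hQ
    have hdet_neg : (-Q).det = 1 := by rw [det_neg, hdet]; norm_num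
    refine ⟨⟨-Q, mem_specialOrthogonalGroup_iff.2 ⟨hnegQ, hdet_neg⟩⟩, -‖w‖⁻¹,
      neg_ne_zero.2 hnorm, ?_⟩
    rw [submonoid_smul_def, PiLp.ofLp_single, neg_mulVec, hQw, ← WithLp.ofLp_neg,
      WithLp.toLp_ofLp, neg_smul]

lemma isCyclic_of_le_stabilizer {w : EuclideanSpace ℝ (Fin 3)} (hw : w ≠ 0) (H : Subgroup SO3)
    [Finite H] (hH : H ≤ stabilizer SO3 w) : IsCyclic H := by
  obtain ⟨P, c, hc, hP⟩ := exists_specialOrthogonalGroup_smul_single_eq_smul hw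
  have hle : H ≤ (stabilizer SO3 e₀).map (MulAut.conj P).toMonoidHom := by
    rwa [← stabilizer_smul_eq_stabilizer_map_conj, hP, stabilizer_specialOrthogonalGroup_smul hc]
  let e := (stabilizer SO3 e₀).equivMapOfInjective (MulAut.conj P).toMonoidHom
    (MulAut.conj P).injective
  exact isCyclic_of_injective_ringHom
    (axisRotationHom.comp (e.symm.toMonoidHom.comp (Subgroup.inclusion hle)))
    (axisRotationHom_injective.comp (e.symm.injective.comp (Subgroup.inclusion_injective hle)))

/-- If `G` is a finite subgroup of SO(3) and `v ∈ ℝ³` is nonzero, then the stabilizer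
`{A ∈ G : A·v = v}` of `v` in `G` is a cyclic group: it is generated by a single
element `B`, i.e. every element of the stabilizer is a power of `B`. -/
theorem stabilizer_is_cyclic
    (G : Set (Matrix (Fin 3) (Fin 3) ℝ)) (hGfin : G.Finite)
    (hGrot : ∀ A ∈ G, IsRotation A)
    (hGone : (1 : Matrix (Fin 3) (Fin 3) ℝ) ∈ G)
    (hGmul : ∀ A ∈ G, ∀ B ∈ G, A * B ∈ G)
    (hGinv : ∀ A ∈ G, A⁻¹ ∈ G)
    (v : EuclideanSpace ℝ (Fin 3)) (hv : v ≠ 0) :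
    ∃ B ∈ {A | A ∈ G ∧ act A v = v},
      ∀ A ∈ {A | A ∈ G ∧ act A v = v}, ∃ n : ℕ, A = B ^ n := by
  let H := specialOrthogonalSubgroupOf G hGone hGmul hGinv
  let S := H ⊓ stabilizer SO3 v
  have : Finite H := (hGfin.preimage Subtype.val_injective.injOn).to_subtype
  have : Finite S := Finite.of_injective _ (Subgroup.inclusion_injective inf_le_left)
  have : IsCyclic S := isCyclic_of_le_stabilizer hv S inf_le_right
  obtain ⟨B, hB⟩ := IsCyclic.exists_monoid_generator (α := S)
  refine ⟨B.1.1, ⟨B.2.1, B.2.2⟩, fun A ⟨hAG, hAv⟩ => ?_⟩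
  have hA : A ∈ SO3 := mem_specialOrthogonalGroup_iff.2
    ⟨(mem_orthogonalGroup_iff' _ _).2 (hGrot A hAG).1, (hGrot A hAG).2⟩
  obtain ⟨n, hn⟩ := (Submonoid.mem_powers_iff _ _).1 (hB ⟨⟨A, hA⟩, hAG, hAv⟩)
  exact ⟨n, (congrArg (fun x : S => x.1.1) hn).symm⟩
end

section
/- If v ∈ ℝ³ is nonzero and the orbit G_tet·v = {A·v : A ∈ G_tet} has exactly 4 elements, then these 4 points are pairwise equidistant: there exists d > 0 such that dist(p, q) = d for all distinct p, q ∈ G_tet·v (i.e., the orbit forms a regular tetrahedron). -/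
open Matrix

/-- The orbit of a point under a set of matrices. -/
def orb (G : Set (Matrix (Fin 3) (Fin 3) ℝ)) (v : EuclideanSpace ℝ (Fin 3)) :
    Set (EuclideanSpace ℝ (Fin 3)) := {q | ∃ A ∈ G, act A v = q}

/-- The vertices of a regular tetrahedron inscribed in the cube [−1,1]³. -/
noncomputable def Vtet : Set (EuclideanSpace ℝ (Fin 3)) :=
  {!₂[1, 1, 1], !₂[1, -1, -1], !₂[-1, 1, -1], !₂[-1, -1, 1]}

/-- The tetrahedral rotation group: all rotations preserving `Vtet` setwise. -/
noncomputable def Gtet : Set (Matrix (Fin 3) (Fin 3) ℝ) :=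
  {A | IsRotation A ∧ act A '' Vtet = Vtet}

/-! The orbit of `v = (x, y, z)` contains its images `(x, -y, -z)`, `(-x, y, -z)`, `(-x, -y, z)`
under the half-turns about the coordinate axes and its image `(z, x, y)` under the cyclic
permutation of the coordinates. If at most one coordinate of `v` vanishes, the first four points
are distinct, hence they are the whole orbit; `(z, x, y)` must be one of them, which forces
`x² = y² = z²`, and then any two of the four points are at distance `√(8x²)`. If two coordinates
vanish, the orbit contains the five distinct points `(±a, 0, 0)`, `(0, ±a, 0)`, `(0, 0, a)`. -/

theorem act_one (v : EuclideanSpace ℝ (Fin 3)) : act 1 v = v := by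
  simp [act]

theorem act_mul (A B : Matrix (Fin 3) (Fin 3) ℝ) (v : EuclideanSpace ℝ (Fin 3)) :
    act (A * B) v = act A (act B v) := by
  simp [act, mulVec_mulVec]

theorem act_injective {A : Matrix (Fin 3) (Fin 3) ℝ} (hA : Aᵀ * A = 1) :
    Function.Injective (act A) :=
  Function.LeftInverse.injective (g := act Aᵀ) fun v => by rw [← act_mul, hA, act_one]

theorem IsRotation.mul {A B : Matrix (Fin 3) (Fin 3) ℝ} (hA : IsRotation A)
    (hB : IsRotation B) : IsRotation (A * B) := by
  refine ⟨?_, by rw [det_mul, hA.2, hB.2, mul_one]⟩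
  rw [transpose_mul, Matrix.mul_assoc, ← Matrix.mul_assoc Aᵀ, hA.1, Matrix.one_mul, hB.1]

theorem one_mem_Gtet : (1 : Matrix (Fin 3) (Fin 3) ℝ) ∈ Gtet :=
  ⟨⟨by simp, by simp⟩, by simp [funext act_one]⟩

theorem mul_mem_Gtet {A B : Matrix (Fin 3) (Fin 3) ℝ} (hA : A ∈ Gtet) (hB : B ∈ Gtet) :
    A * B ∈ Gtet :=
  ⟨hA.1.mul hB.1, by rw [show act (A * B) = act A ∘ act B from funext (act_mul A B),
    Set.image_comp, hB.2, hA.2]⟩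

theorem mem_Gtet_of_mapsTo {A : Matrix (Fin 3) (Fin 3) ℝ} (hA : IsRotation A)
    (hmaps : Set.MapsTo (act A) Vtet Vtet) : A ∈ Gtet := by
  have hfin : Vtet.Finite := by simp [Vtet]
  exact ⟨hA, ((hfin.injOn_iff_bijOn_of_mapsTo hmaps).1 (act_injective hA.1).injOn).image_eq⟩

theorem mem_orb_self {G : Set (Matrix (Fin 3) (Fin 3) ℝ)} (hG : 1 ∈ G)
    (v : EuclideanSpace ℝ (Fin 3)) : v ∈ orb G v :=
  ⟨1, hG, act_one v⟩

theorem act_mem_orb {G : Set (Matrix (Fin 3) (Fin 3) ℝ)}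
    (hG : ∀ A ∈ G, ∀ B ∈ G, A * B ∈ G) {A : Matrix (Fin 3) (Fin 3) ℝ} (hA : A ∈ G)
    {v w : EuclideanSpace ℝ (Fin 3)} (hw : w ∈ orb G v) : act A w ∈ orb G v := by
  obtain ⟨B, hB, rfl⟩ := hw
  exact ⟨A * B, hG A hA B hB, act_mul A B v⟩

noncomputable def cyclePerm : Matrix (Fin 3) (Fin 3) ℝ := !![0, 0, 1; 1, 0, 0; 0, 1, 0]
noncomputable def halfTurnX : Matrix (Fin 3) (Fin 3) ℝ := !![1, 0, 0; 0, -1, 0; 0, 0, -1]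
noncomputable def halfTurnY : Matrix (Fin 3) (Fin 3) ℝ := !![-1, 0, 0; 0, 1, 0; 0, 0, -1]
noncomputable def halfTurnZ : Matrix (Fin 3) (Fin 3) ℝ := !![-1, 0, 0; 0, -1, 0; 0, 0, 1]

section Coordinates

variable (a b c : ℝ)

theorem act_cyclePerm : act cyclePerm !₂[a, b, c] = !₂[c, a, b] := by
  ext i; fin_cases i <;> simp [act, cyclePerm]

theorem act_halfTurnX : act halfTurnX !₂[a, b, c] = !₂[a, -b, -c] := by
  ext i; fin_cases i <;> simp [act, halfTurnX]

theorem act_halfTurnY : act halfTurnY !₂[a, b, c] = !₂[-a, b, -c] := by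
  ext i; fin_cases i <;> simp [act, halfTurnY]

theorem act_halfTurnZ : act halfTurnZ !₂[a, b, c] = !₂[-a, -b, c] := by
  ext i; fin_cases i <;> simp [act, halfTurnZ]

end Coordinates

theorem cyclePerm_mem_Gtet : cyclePerm ∈ Gtet := by
  refine mem_Gtet_of_mapsTo ⟨?_, by simp [cyclePerm, det_fin_three]⟩
    (by simp [Set.MapsTo, Vtet, act_cyclePerm])
  ext i j; fin_cases i <;> fin_cases j <;> simp [cyclePerm, mul_apply, Fin.sum_univ_three]

theorem halfTurnX_mem_Gtet : halfTurnX ∈ Gtet := by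
  refine mem_Gtet_of_mapsTo ⟨?_, by simp [halfTurnX, det_fin_three]⟩
    (by simp [Set.MapsTo, Vtet, act_halfTurnX])
  ext i j; fin_cases i <;> fin_cases j <;> simp [halfTurnX, mul_apply, Fin.sum_univ_three]

theorem halfTurnY_mem_Gtet : halfTurnY ∈ Gtet := by
  refine mem_Gtet_of_mapsTo ⟨?_, by simp [halfTurnY, det_fin_three]⟩
    (by simp [Set.MapsTo, Vtet, act_halfTurnY])
  ext i j; fin_cases i <;> fin_cases j <;> simp [halfTurnY, mul_apply, Fin.sum_univ_three]

theorem halfTurnZ_mem_Gtet : halfTurnZ ∈ Gtet := by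
  refine mem_Gtet_of_mapsTo ⟨?_, by simp [halfTurnZ, det_fin_three]⟩
    (by simp [Set.MapsTo, Vtet, act_halfTurnZ])
  ext i j; fin_cases i <;> fin_cases j <;> simp [halfTurnZ, mul_apply, Fin.sum_univ_three]

theorem act_mem_orb_Gtet {A : Matrix (Fin 3) (Fin 3) ℝ} (hA : A ∈ Gtet)
    {v w : EuclideanSpace ℝ (Fin 3)} (hw : w ∈ orb Gtet v) : act A w ∈ orb Gtet v :=
  act_mem_orb (fun _ hA _ hB => mul_mem_Gtet hA hB) hA hw

noncomputable def kleinOrbit (x y z : ℝ) : Set (EuclideanSpace ℝ (Fin 3)) :=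
  {!₂[x, y, z], !₂[x, -y, -z], !₂[-x, y, -z], !₂[-x, -y, z]}

section KleinOrbit

variable {x y z : ℝ}

theorem kleinOrbit_subset_orb {v : EuclideanSpace ℝ (Fin 3)} (h : !₂[x, y, z] ∈ orb Gtet v) :
    kleinOrbit x y z ⊆ orb Gtet v := by
  have hX := act_mem_orb_Gtet halfTurnX_mem_Gtet h
  have hY := act_mem_orb_Gtet halfTurnY_mem_Gtet h
  have hZ := act_mem_orb_Gtet halfTurnZ_mem_Gtet h
  rw [act_halfTurnX] at hX
  rw [act_halfTurnY] at hY
  rw [act_halfTurnZ] at hZ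
  exact Set.insert_subset h <| Set.insert_subset hX <| Set.insert_subset hY <|
    Set.singleton_subset_iff.2 hZ

theorem ncard_kleinOrbit (hxy : x ≠ 0 ∨ y ≠ 0) (hxz : x ≠ 0 ∨ z ≠ 0) (hyz : y ≠ 0 ∨ z ≠ 0) :
    (kleinOrbit x y z).ncard = 4 := by
  refine Set.ncard_eq_four.2 ⟨_, _, _, _, ?_, ?_, ?_, ?_, ?_, ?_, rfl⟩ <;>
    simp [self_eq_neg, neg_eq_self] <;> tauto

theorem sq_eq_of_cycle_mem_kleinOrbit (h : !₂[z, x, y] ∈ kleinOrbit x y z) :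
    y ^ 2 = x ^ 2 ∧ z ^ 2 = x ^ 2 := by
  simp only [kleinOrbit, Set.mem_insert_iff, Set.mem_singleton_iff] at h
  rcases h with h | h | h | h <;>
    simp only [WithLp.toLp.injEq, Matrix.vecCons_inj, and_true] at h <;>
    obtain ⟨rfl, rfl, -⟩ := h <;> constructor <;> ring

theorem dist_eq_of_mem_kleinOrbit (hy : y ^ 2 = x ^ 2) (hz : z ^ 2 = x ^ 2)
    {p q : EuclideanSpace ℝ (Fin 3)} (hp : p ∈ kleinOrbit x y z) (hq : q ∈ kleinOrbit x y z)
    (hpq : p ≠ q) : dist p q = √(8 * x ^ 2) := by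
  simp only [kleinOrbit, Set.mem_insert_iff, Set.mem_singleton_iff] at hp hq
  rcases hp with rfl | rfl | rfl | rfl <;> rcases hq with rfl | rfl | rfl | rfl <;>
    first
    | exact absurd rfl hpq
    | (rw [EuclideanSpace.dist_eq]
       congr 1
       simp [Fin.sum_univ_three, Real.dist_eq]
       linarith)

end KleinOrbit

theorem eq_of_subset_of_ncard_eq_four {α : Type*} {S T : Set α} (hsub : T ⊆ S)
    (hT : T.ncard = 4) (hS : S.ncard = 4) : T = S :=
  Set.eq_of_subset_of_ncard_le hsub (by rw [hS, hT]) (Set.finite_of_ncard_ne_zero (by omega))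

theorem axis_not_mem_orb_Gtet {v : EuclideanSpace ℝ (Fin 3)} (hcard : (orb Gtet v).ncard = 4)
    {a : ℝ} (ha : a ≠ 0) : !₂[a, 0, 0] ∉ orb Gtet v := by
  intro h
  have h₁ := act_mem_orb_Gtet cyclePerm_mem_Gtet h
  rw [act_cyclePerm] at h₁
  have h₂ := act_mem_orb_Gtet cyclePerm_mem_Gtet h₁
  rw [act_cyclePerm] at h₂
  have hT : ({!₂[a, 0, 0], !₂[-a, 0, 0], !₂[0, a, 0], !₂[0, -a, 0]} :
      Set (EuclideanSpace ℝ (Fin 3))).ncard = 4 := by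
    refine Set.ncard_eq_four.2 ⟨_, _, _, _, ?_, ?_, ?_, ?_, ?_, ?_, rfl⟩ <;> simp [ha, self_eq_neg]
  have hsub : ({!₂[a, 0, 0], !₂[-a, 0, 0], !₂[0, a, 0], !₂[0, -a, 0]} :
      Set (EuclideanSpace ℝ (Fin 3))) ⊆ orb Gtet v := by
    have := kleinOrbit_subset_orb h
    have := kleinOrbit_subset_orb h₁
    simp_all [kleinOrbit, Set.insert_subset_iff]
  rw [← eq_of_subset_of_ncard_eq_four hsub hT hcard] at h₂
  simp [ha] at h₂

theorem exists_axis_mem_orb_Gtet {x y z : ℝ} (hv : !₂[x, y, z] ≠ 0)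
    (h : (x = 0 ∧ y = 0) ∨ (x = 0 ∧ z = 0) ∨ (y = 0 ∧ z = 0)) :
    ∃ a ≠ 0, !₂[a, 0, 0] ∈ orb Gtet !₂[x, y, z] := by
  have hv_mem := mem_orb_self one_mem_Gtet !₂[x, y, z]
  have hC := act_mem_orb_Gtet cyclePerm_mem_Gtet hv_mem
  have hCC := act_mem_orb_Gtet cyclePerm_mem_Gtet hC
  simp only [act_cyclePerm] at hC hCC
  rcases h with ⟨rfl, rfl⟩ | ⟨rfl, rfl⟩ | ⟨rfl, rfl⟩
  · exact ⟨z, by simpa using hv, hC⟩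
  · exact ⟨y, by simpa using hv, hCC⟩
  · exact ⟨x, by simpa using hv, hv_mem⟩

/-- If the orbit of a nonzero vector under the tetrahedral rotation group has exactly
4 elements, then these 4 points are pairwise equidistant, i.e. they form a regular
tetrahedron. -/
theorem tetrahedral_orbit_four_is_regular_tetrahedron
    (v : EuclideanSpace ℝ (Fin 3)) (hv : v ≠ 0) (hcard : (orb Gtet v).ncard = 4) :
    ∃ d : ℝ, 0 < d ∧
      ∀ p ∈ orb Gtet v, ∀ q ∈ orb Gtet v, p ≠ q → dist p q = d := by
  obtain ⟨x, y, z, rfl⟩ : ∃ x y z : ℝ, v = !₂[x, y, z] :=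
    ⟨v 0, v 1, v 2, by ext i; fin_cases i <;> rfl⟩
  have hv_mem := mem_orb_self one_mem_Gtet !₂[x, y, z]
  by_cases hK : (x = 0 ∧ y = 0) ∨ (x = 0 ∧ z = 0) ∨ (y = 0 ∧ z = 0)
  · obtain ⟨a, ha, h⟩ := exists_axis_mem_orb_Gtet hv hK
    exact absurd h (axis_not_mem_orb_Gtet hcard ha)
  · simp only [not_or, not_and_or] at hK
    obtain ⟨hxy, hxz, hyz⟩ := hK
    have hS := eq_of_subset_of_ncard_eq_four (kleinOrbit_subset_orb hv_mem)
      (ncard_kleinOrbit hxy hxz hyz) hcard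
    have hC := act_mem_orb_Gtet cyclePerm_mem_Gtet hv_mem
    rw [act_cyclePerm, ← hS] at hC
    obtain ⟨hy, hz⟩ := sq_eq_of_cycle_mem_kleinOrbit hC
    have hx : x ≠ 0 := fun hx₀ => by simp_all
    refine ⟨√(8 * x ^ 2), by positivity, ?_⟩
    rw [← hS]
    exact fun p hp q hq => dist_eq_of_mem_kleinOrbit hy hz hp hq
end

section
/- Uniqueness of the smallest enclosing ball: for every nonempty finite subset P of ℝ³ there is a unique point c ∈ ℝ³ minimizing the enclosing radius, i.e., there exists exactly one c such that for all c' ∈ ℝ³, max_{p ∈ P} dist(c, p) ≤ max_{p ∈ P} dist(c', p). -/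
open Metric Finset

private lemma midpoint_dist_sq {E : Type*} [NormedAddCommGroup E] [InnerProductSpace ℝ E]
    (x y p : E) :
    dist ((1/2 : ℝ) • (x + y)) p ^ 2
      = (dist x p ^ 2 + dist y p ^ 2) / 2 - dist x y ^ 2 / 4 := by
  have hpar := parallelogram_law_with_norm ℝ (x - p) (y - p)
  have h1 : (1/2 : ℝ) • (x + y) - p = (1/2 : ℝ) • ((x - p) + (y - p)) := by
    rw [smul_add, smul_add]; module
  have h2 : (x - p) - (y - p) = x - y := by abel
  simp only [dist_eq_norm]
  rw [h1, norm_smul]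
  rw [h2] at hpar
  have : ‖(1/2 : ℝ)‖ = 1/2 := by norm_num
  rw [this]
  nlinarith [norm_nonneg ((x - p) + (y - p))]

/-- Uniqueness of the smallest enclosing ball: for every nonempty finite subset `P`
of ℝ³ there is exactly one point `c` minimizing the enclosing radius
`max_{p ∈ P} dist c p`. -/
theorem smallest_enclosing_ball_unique
    (P : Finset (EuclideanSpace ℝ (Fin 3))) (hP : P.Nonempty) :
    ∃! c : EuclideanSpace ℝ (Fin 3),
      ∀ c' : EuclideanSpace ℝ (Fin 3),
        P.sup' hP (fun p => dist c p) ≤ P.sup' hP (fun p => dist c' p) := by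
  set f : EuclideanSpace ℝ (Fin 3) → ℝ := fun c => P.sup' hP (fun p => dist c p) with hf
  -- f is 1-Lipschitz
  have hle : ∀ c c', f c ≤ f c' + dist c c' := by
    intro c c'
    refine Finset.sup'_le _ _ fun p hp => ?_
    calc dist c p ≤ dist c' p + dist c c' := by
          have := dist_triangle c c' p; linarith [dist_comm c c']
      _ ≤ f c' + dist c c' := by
          gcongr; exact Finset.le_sup' _ hp
  have hcont : Continuous f := by
    refine (LipschitzWith.continuous (K := 1) ?_)
    rw [lipschitzWith_iff_dist_le_mul]
    intro c c'
    rw [Real.dist_eq, NNReal.coe_one, one_mul, abs_le]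
    constructor
    · have := hle c' c; rw [dist_comm c' c] at this; linarith
    · have := hle c c'; linarith
  have hex : ∃ p, p ∈ P := hP
  obtain ⟨p0, hp0⟩ := hex
  have hnonneg : ∀ c, 0 ≤ f c := fun c =>
    le_trans dist_nonneg (Finset.le_sup' _ hp0)
  have hR : (0:ℝ) ≤ f p0 := hnonneg p0
  obtain ⟨c, hcmem, hcmin⟩ := (isCompact_closedBall p0 (f p0)).exists_isMinOn
    ⟨p0, mem_closedBall_self hR⟩ hcont.continuousOn
  have hglobal : ∀ c', f c ≤ f c' := by
    intro c'
    by_cases h : c' ∈ closedBall p0 (f p0)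
    · exact hcmin h
    · have h1 : f p0 < dist c' p0 := by
        simpa [mem_closedBall, dist_comm] using h
      have h2 : dist c' p0 ≤ f c' := Finset.le_sup' _ hp0
      have h3 : f c ≤ f p0 := hcmin (mem_closedBall_self hR)
      linarith
  refine ⟨c, hglobal, ?_⟩
  -- uniqueness
  intro c2 hc2
  by_contra hne
  have hrr : f c2 = f c := le_antisymm (hc2 c) (hglobal c2)
  set r := f c with hrdef
  set m : EuclideanSpace ℝ (Fin 3) := (1/2 : ℝ) • (c2 + c) with hm
  have hd : 0 < dist c2 c := dist_pos.2 hne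
  -- f m < r
  have hfm : f m < r := by
    obtain ⟨p, hp, hpe⟩ := Finset.exists_mem_eq_sup' hP (fun p => dist m p)
    have h1 : dist c2 p ≤ r := hrr ▸ Finset.le_sup' (fun p => dist c2 p) hp
    have h2 : dist c p ≤ r := Finset.le_sup' (fun p => dist c p) hp
    have hsq : dist m p ^ 2 < r ^ 2 := by
      rw [hm, midpoint_dist_sq]
      nlinarith [dist_nonneg (x := c2) (y := p), dist_nonneg (x := c) (y := p)]
    have : f m = dist m p := hpe
    rw [this]
    nlinarith [dist_nonneg (x := m) (y := p), hnonneg c]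
  exact absurd (hglobal m) (not_le.2 hfm)
end
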